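/- arXiv:1505.04930 — 3 statements merged into one kernel-verified Lean document; each statement's English description precedes it below -/
import Mathlib

section
/- (Gagliardo–Nirenberg interpolation via integration by parts) For every n ≥ 1 there exists C_n > 0 such that for every compactly supported smooth function u : ℝⁿ → ℝ, ∫_{ℝⁿ} |∇u|⁴ dx ≤ C_n · ‖u‖_∞² · ∫_{ℝⁿ} |∇²u|² dx, where |∇²u|² denotes the sum of squares of all second partial derivatives. -/
open MeasureTheory

set_option maxHeartbeats 2000000 in
/-- Gagliardo–Nirenberg interpolation: `∫ |∇u|⁴ ≤ Cₙ ‖u‖_∞² ∫ |∇²u|²` for compactly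
supported smooth `u : ℝⁿ → ℝ`. -/
theorem gagliardo_nirenberg_grad4 (n : ℕ) (hn : 1 ≤ n) :
    ∃ C : ℝ, 0 < C ∧ ∀ u : EuclideanSpace ℝ (Fin n) → ℝ,
      ContDiff ℝ (⊤ : ℕ∞) u → HasCompactSupport u →
      ∫ x, (∑ i, (fderiv ℝ u x (EuclideanSpace.single i 1)) ^ 2) ^ 2 ≤
        C * (⨆ x, |u x|) ^ 2 *
          ∫ x, ∑ i, ∑ j,
            (fderiv ℝ (fun y => fderiv ℝ u y (EuclideanSpace.single i 1)) x
              (EuclideanSpace.single j 1)) ^ 2 := by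
  have hn' : (1 : ℝ) ≤ n := by exact_mod_cast hn
  refine ⟨10 * n, by linarith, ?_⟩
  intro u hu hsupp
  let E := EuclideanSpace ℝ (Fin n)
  let e : Fin n → E := fun i => EuclideanSpace.single i 1
  let d : Fin n → E → ℝ := fun i x => fderiv ℝ u x (e i)
  let dd : Fin n → Fin n → E → ℝ := fun i j x => fderiv ℝ (d i) x (e j)
  let g : E → ℝ := fun x => ∑ i, (d i x) ^ 2
  let H : E → ℝ := fun x => ∑ i, ∑ j, (dd i j x) ^ 2
  let M : ℝ := ⨆ x, |u x|
  show ∫ x, g x ^ 2 ≤ 10 * n * M ^ 2 * ∫ x, H x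
  -- basic regularity facts
  have hud : ∀ i, ContDiff ℝ (⊤ : ℕ∞) (d i) := fun i =>
    (hu.fderiv_right (by simp)).clm_apply contDiff_const
  have hcsd : ∀ i, HasCompactSupport (d i) := fun i => hsupp.fderiv_apply ℝ (e i)
  have hudd : ∀ i j, ContDiff ℝ (⊤ : ℕ∞) (dd i j) := fun i j =>
    ((hud i).fderiv_right (by simp)).clm_apply contDiff_const
  have hcsdd : ∀ i j, HasCompactSupport (dd i j) := fun i j => (hcsd i).fderiv_apply ℝ (e j)
  have hdiff : ∀ i, Differentiable ℝ (d i) := fun i => (hud i).differentiable (by simp)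
  have hgc : ContDiff ℝ (⊤ : ℕ∞) g := ContDiff.sum fun i _ => (hud i).pow 2
  have hgdiff : Differentiable ℝ g := hgc.differentiable (by simp)
  have hgsupp : HasCompactSupport g := by
    apply HasCompactSupport.intro (hsupp.isCompact)
    intro x hx
    have hz : ∀ i, d i x = 0 := by
      intro i
      have : fderiv ℝ u x = 0 := by
        exact fderiv_of_notMem_tsupport ℝ hx
      simp [d, this]
    simp [g, hz]
  have hgnn : ∀ x, 0 ≤ g x := fun x => Finset.sum_nonneg fun i _ => sq_nonneg _
  have hHnn : ∀ x, 0 ≤ H x := fun x =>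
    Finset.sum_nonneg fun i _ => Finset.sum_nonneg fun j _ => sq_nonneg _
  -- the w functions
  let w : Fin n → E → ℝ := fun i x => d i x * g x
  have hwc : ∀ i, ContDiff ℝ (⊤ : ℕ∞) (w i) := fun i => (hud i).mul hgc
  have hwdiff : ∀ i, Differentiable ℝ (w i) := fun i => (hwc i).differentiable (by simp)
  have hwsupp : ∀ i, HasCompactSupport (w i) := fun i => (hcsd i).mul_right
  -- derivative of g
  have hG : ∀ x, HasFDerivAt g (∑ j, (2 * d j x) • fderiv ℝ (d j) x) x := by
    intro x
    have h : ∀ j ∈ Finset.univ, HasFDerivAt (fun y => (d j y) ^ 2)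
        ((2 * d j x) • fderiv ℝ (d j) x) x := by
      intro j _
      have h1 := ((hdiff j x).hasFDerivAt).mul ((hdiff j x).hasFDerivAt)
      have h2 : (d j * d j) = fun y => (d j y) ^ 2 := by
        funext y; simp only [Pi.mul_apply]; ring
      rw [h2] at h1
      refine h1.congr_fderiv ?_
      rw [two_mul, add_smul]
    exact HasFDerivAt.fun_sum h
  have hGapp : ∀ x i, fderiv ℝ g x (e i) = ∑ j, 2 * d j x * dd j i x := by
    intro x i
    rw [(hG x).fderiv]
    simp [ContinuousLinearMap.sum_apply, ContinuousLinearMap.smul_apply, dd, mul_assoc]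
  -- derivative of w i
  have hWapp : ∀ i x, fderiv ℝ (w i) x (e i)
      = d i x * (∑ j, 2 * d j x * dd j i x) + g x * dd i i x := by
    intro i x
    have h1 : HasFDerivAt (w i) (d i x • fderiv ℝ g x + g x • fderiv ℝ (d i) x) x :=
      ((hdiff i x).hasFDerivAt).mul ((hgdiff x).hasFDerivAt)
    rw [h1.fderiv]
    simp only [ContinuousLinearMap.add_apply, ContinuousLinearMap.smul_apply, smul_eq_mul]
    rw [hGapp x i]
  -- integrability helper
  have intg : ∀ f : E → ℝ, Continuous f → HasCompactSupport f → Integrable f volume := fun f hf hc =>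
    hf.integrable_of_hasCompactSupport hc
  have hcontdw : ∀ i, Continuous fun x => fderiv ℝ (w i) x (e i) :=
    fun i => ((((hwc i).fderiv_right (m := (⊤ : ℕ∞)) (by simp)).clm_apply contDiff_const).continuous)
  -- integration by parts
  have ibp : ∀ i, ∫ x, w i x * d i x = - ∫ x, fderiv ℝ (w i) x (e i) * u x := by
    intro i
    exact integral_mul_fderiv_eq_neg_fderiv_mul_of_integrable
      (intg _ ((hcontdw i).mul hu.continuous) hsupp.mul_left)
      (intg _ ((hwc i).continuous.mul (hud i).continuous) (hcsd i).mul_left)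
      (intg _ ((hwc i).continuous.mul hu.continuous) hsupp.mul_left)
      (fun x _ => hwdiff i x) (fun x _ => hu.differentiable (by simp) x)
  -- the divergence-type quantity
  let P : E → ℝ := fun x => ∑ i, fderiv ℝ (w i) x (e i)
  have hPcont : Continuous P := continuous_finset_sum _ fun i _ => hcontdw i
  have hPsupp : HasCompactSupport P := by
    apply HasCompactSupport.intro ((hsupp.isCompact))
    intro x hx
    have : ∀ i, fderiv ℝ (w i) x (e i) = 0 := by
      intro i
      rw [hWapp i x]
      have hz : ∀ i, d i x = 0 := by
        intro i
        have h0 : fderiv ℝ u x = 0 := fderiv_of_notMem_tsupport ℝ hx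
        simp [d, h0]
      simp [hz, g]
    simp [P, this]
  -- key identity : ∫ g² = - ∫ P u
  have key : ∫ x, g x ^ 2 = - ∫ x, P x * u x := by
    have e1 : ∀ x, g x ^ 2 = ∑ i, w i x * d i x := by
      intro x
      have h0 : ∀ i ∈ (Finset.univ : Finset (Fin n)), w i x * d i x = d i x ^ 2 * g x :=
        fun i _ => by simp only [w]; ring
      rw [Finset.sum_congr rfl h0, ← Finset.sum_mul]
      simp only [g]
      ring
    calc ∫ x, g x ^ 2 = ∫ x, ∑ i, w i x * d i x := by
          exact integral_congr_ae (Filter.Eventually.of_forall fun x => e1 x)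
      _ = ∑ i, ∫ x, w i x * d i x := by
          exact integral_finset_sum _ fun i _ =>
            intg _ ((hwc i).continuous.mul (hud i).continuous) (hcsd i).mul_left
      _ = ∑ i, - ∫ x, fderiv ℝ (w i) x (e i) * u x := by
          exact Finset.sum_congr rfl fun i _ => ibp i
      _ = - ∑ i, ∫ x, fderiv ℝ (w i) x (e i) * u x := by rw [Finset.sum_neg_distrib]
      _ = - ∫ x, ∑ i, fderiv ℝ (w i) x (e i) * u x := by
          rw [integral_finset_sum _ fun i _ =>
            intg (fun x => fderiv ℝ (w i) x (e i) * u x) ((hcontdw i).mul hu.continuous) hsupp.mul_left]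
      _ = - ∫ x, P x * u x := by
          congr 1
          exact integral_congr_ae (Filter.Eventually.of_forall fun x => by
            simp [P, Finset.sum_mul])
  -- sup-norm facts
  have hMb : ∀ x, |u x| ≤ M := by
    obtain ⟨x0, hx0⟩ := hu.continuous.abs.exists_forall_ge_of_hasCompactSupport hsupp.abs
    intro x
    exact le_ciSup ⟨|u x0|, by rintro y ⟨z, rfl⟩; exact hx0 z⟩ x
  have hM0 : 0 ≤ M := le_trans (abs_nonneg (u 0)) (hMb 0)
  -- pointwise estimate : -(P x * u x) ≤ (1/2) g² + 5 n M² H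
  have pointwise : ∀ x, -(P x * u x) ≤ (1/2) * g x ^ 2 + (5 * n) * M ^ 2 * H x := by
    intro x
    have h1 : -(P x * u x) ≤ |P x| * M := by
      calc -(P x * u x) ≤ |P x * u x| := neg_le_abs _
        _ = |P x| * |u x| := abs_mul _ _
        _ ≤ |P x| * M := mul_le_mul_of_nonneg_left (hMb x) (abs_nonneg _)
    refine h1.trans ?_
    -- split P into two sums
    set SA : ℝ := ∑ i, d i x * (∑ j, 2 * d j x * dd j i x) with hSA
    set SB : ℝ := ∑ i, g x * dd i i x with hSB
    have hP : P x = SA + SB := by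
      simp only [P, hSA, hSB, ← Finset.sum_add_distrib]
      exact Finset.sum_congr rfl fun i _ => hWapp i x
    have habs : |P x| ≤ |SA| + |SB| := hP ▸ abs_add_le _ _
    have hdiag : ∑ i, (dd i i x) ^ 2 ≤ H x := by
      apply Finset.sum_le_sum
      intro i _
      exact Finset.single_le_sum (fun j _ => sq_nonneg (dd i j x)) (Finset.mem_univ i)
    -- bound for SB
    have hB : |SB| * M ≤ (1/4) * g x ^ 2 + n * M ^ 2 * H x := by
      have h2 : SB = g x * ∑ i, dd i i x := by rw [hSB, Finset.mul_sum]
      have h3 : |SB| = g x * |∑ i, dd i i x| := by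
        rw [h2, abs_mul, abs_of_nonneg (hgnn x)]
      have h4 : (∑ i, dd i i x) ^ 2 ≤ (n : ℝ) * ∑ i, (dd i i x) ^ 2 := by
        have := sq_sum_le_card_mul_sum_sq (s := (Finset.univ : Finset (Fin n)))
          (f := fun i => dd i i x)
        simpa using this
      have h5 : (∑ i, dd i i x) ^ 2 ≤ (n : ℝ) * H x := by
        refine h4.trans ?_
        exact mul_le_mul_of_nonneg_left hdiag (by positivity)
      rw [h3]
      have hA := abs_nonneg (∑ i, dd i i x)
      have hg := hgnn x
      have hH := hHnn x
      nlinarith [sq_nonneg (g x / 2 - M * |∑ i, dd i i x|), sq_abs (∑ i, dd i i x),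
        mul_nonneg hM0 hM0, sq_nonneg M]
    -- bound for SA
    have hAbd : |SA| * M ≤ (1/4) * g x ^ 2 + 4 * M ^ 2 * H x := by
      have h2 : |SA| ≤ ∑ i, ∑ j, |d i x * (2 * d j x * dd j i x)| := by
        calc |SA| = |∑ i, ∑ j, d i x * (2 * d j x * dd j i x)| := by
              rw [hSA]
              congr 1
              exact Finset.sum_congr rfl fun i _ => Finset.mul_sum _ _ _
          _ ≤ ∑ i, |∑ j, d i x * (2 * d j x * dd j i x)| := Finset.abs_sum_le_sum_abs _ _
          _ ≤ ∑ i, ∑ j, |d i x * (2 * d j x * dd j i x)| :=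
              Finset.sum_le_sum fun i _ => Finset.abs_sum_le_sum_abs _ _
      have h3 : |SA| * M ≤ (∑ i, ∑ j, |d i x * (2 * d j x * dd j i x)|) * M :=
        mul_le_mul_of_nonneg_right h2 hM0
      have h3' : (∑ i, ∑ j, |d i x * (2 * d j x * dd j i x)|) * M
          = ∑ i, ∑ j, |d i x * (2 * d j x * dd j i x)| * M := by
        rw [Finset.sum_mul]
        exact Finset.sum_congr rfl fun i _ => Finset.sum_mul _ _ _
      refine (h3.trans (le_of_eq h3')).trans ?_
      have h4 : ∀ i j : Fin n, |d i x * (2 * d j x * dd j i x)| * M ≤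
          (1/4) * ((d i x)^2 * (d j x)^2) + 4 * M^2 * (dd j i x)^2 := by
        intro i j
        have e1 : |d i x * (2 * d j x * dd j i x)| = 2 * (|d i x * d j x| * |dd j i x|) := by
          rw [show d i x * (2 * d j x * dd j i x) = 2 * ((d i x * d j x) * dd j i x) by ring,
            abs_mul, abs_mul, abs_two]
        rw [e1]
        have ha := abs_nonneg (d i x * d j x)
        have hb := abs_nonneg (dd j i x)
        nlinarith [sq_nonneg (|d i x * d j x| / 2 - 2 * M * |dd j i x|),
          sq_abs (d i x * d j x), sq_abs (dd j i x), mul_pow (d i x) (d j x) 2]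
      calc ∑ i, ∑ j, |d i x * (2 * d j x * dd j i x)| * M
          ≤ ∑ i, ∑ j, ((1/4) * ((d i x)^2 * (d j x)^2) + 4 * M^2 * (dd j i x)^2) :=
            Finset.sum_le_sum fun i _ => Finset.sum_le_sum fun j _ => h4 i j
        _ = (∑ i, ∑ j, (1/4) * ((d i x)^2 * (d j x)^2))
              + ∑ i, ∑ j, 4 * M^2 * (dd j i x)^2 := by
            simp_rw [Finset.sum_add_distrib]
        _ = (1/4) * g x ^ 2 + 4 * M ^ 2 * H x := by
            have hgg : (∑ i, ∑ j, (1/4 : ℝ) * ((d i x)^2 * (d j x)^2)) = (1/4) * g x ^ 2 := by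
              simp_rw [← Finset.mul_sum]
              rw [← Finset.sum_mul]
              simp only [g]
              ring
            have hHH : (∑ i, ∑ j, (4 : ℝ) * M^2 * (dd j i x)^2) = 4 * M ^ 2 * H x := by
              simp_rw [← Finset.mul_sum]
              congr 1
              simp only [H]
              exact Finset.sum_comm
            rw [hgg, hHH]
    have hfinal : |SA| * M + |SB| * M ≤ (1/2) * g x ^ 2 + ((n : ℝ) + 4) * M ^ 2 * H x := by
      have := add_le_add hAbd hB
      linarith
    have hn4 : ((n : ℝ) + 4) * M ^ 2 * H x ≤ (5 * n) * M ^ 2 * H x := by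
      have : ((n : ℝ) + 4) ≤ 5 * n := by linarith
      have h := mul_le_mul_of_nonneg_right (mul_le_mul_of_nonneg_right this (sq_nonneg M)) (hHnn x)
      linarith
    calc |P x| * M ≤ (|SA| + |SB|) * M := mul_le_mul_of_nonneg_right habs hM0
      _ = |SA| * M + |SB| * M := by ring
      _ ≤ (1/2) * g x ^ 2 + ((n : ℝ) + 4) * M ^ 2 * H x := hfinal
      _ ≤ (1/2) * g x ^ 2 + (5 * n) * M ^ 2 * H x := by linarith
  -- integrate the pointwise estimate
  have hgint : Integrable (fun x => g x ^ 2) volume :=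
    intg _ (hgc.continuous.pow 2) (hgsupp.comp_left (g := fun t : ℝ => t ^ 2) (by simp))
  have hHint : Integrable H volume :=
    intg _ (continuous_finset_sum _ fun i _ => continuous_finset_sum _ fun j _ =>
      ((hudd i j).continuous.pow 2)) (by
        apply HasCompactSupport.intro hsupp.isCompact
        intro x hx
        have hz2 : ∀ i j, dd i j x = 0 := by
          intro i j
          have hsub : Function.support (d i) ⊆ tsupport u := by
            intro y hy
            by_contra hyu
            exact hy (by simp [d, fderiv_of_notMem_tsupport ℝ hyu])
          have hnot : x ∉ tsupport (d i) :=
            fun hmem => hx (closure_minimal hsub isClosed_closure hmem)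
          have : fderiv ℝ (d i) x = 0 := fderiv_of_notMem_tsupport ℝ hnot
          simp [dd, this]
        simp [H, hz2])
  have hPu : Integrable (fun x => -(P x * u x)) volume :=
    (intg _ (hPcont.mul hu.continuous) hsupp.mul_left).neg
  have step : ∫ x, g x ^ 2 ≤ (1/2) * (∫ x, g x ^ 2) + (5 * n) * M ^ 2 * (∫ x, H x) := by
    have h1 : ∫ x, g x ^ 2 = ∫ x, -(P x * u x) := by
      rw [key, ← integral_neg]
    have h2 : ∫ x, -(P x * u x) ≤ ∫ x, ((1/2) * g x ^ 2 + (5 * n) * M ^ 2 * H x) := by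
      apply integral_mono hPu
      · exact (hgint.const_mul _).add (hHint.const_mul _)
      · exact pointwise
    rw [integral_add (hgint.const_mul _) (hHint.const_mul _), integral_const_mul,
      integral_const_mul] at h2
    exact h1.trans_le h2
  have hHI : 0 ≤ ∫ x, H x := integral_nonneg hHnn
  have hMH : 0 ≤ M ^ 2 * ∫ x, H x := mul_nonneg (sq_nonneg M) hHI
  linarith [step]
end

section
/- (One-dimensional strong maximum principle with zeroth-order term) Let u : [0,1] → ℝ be C², suppose u'' + b(x)u' + c(x)u ≥ 0 on (0,1) with b, c continuous and c ≤ 0, and suppose u attains a nonnegative interior maximum: there exists x₀ ∈ (0,1) with u(x₀) = max_{[0,1]} u ≥ 0. Then u is constant on [0,1]. -/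
open Set Filter Topology

/-!
Hopf's argument. Suppose `u z < u x₀` for some `z > x₀`. Choose `α > 0` with
`α ^ 2 + b α + c > 0` on `[x₀, z]` and `ε > 0` so small that `w = u + ε e^{α x}` still has
`w z < u x₀`. Then `w'' + b w' + c w > 0`, so `w` has no nonnegative interior local maximum; its
maximum on `[x₀, z]`, which is at least `u x₀ ≥ 0`, must therefore sit at `x₀`, and this forces
`u'(x₀) ≤ -ε α e^{α x₀} < 0`, contradicting `u'(x₀) = 0` at the interior maximum `x₀`.
The case `z < x₀` follows by the reflection `x ↦ -x`.
-/

noncomputable def ellipticOp (b c u : ℝ → ℝ) (x : ℝ) : ℝ :=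
  deriv (deriv u) x + b x * deriv u x + c x * u x

section ellipticOp

variable {b c u v : ℝ → ℝ} {x : ℝ}

lemma ellipticOp_add (hu : ∀ᶠ y in 𝓝 x, DifferentiableAt ℝ u y)
    (hv : ∀ᶠ y in 𝓝 x, DifferentiableAt ℝ v y) (hu' : DifferentiableAt ℝ (deriv u) x)
    (hv' : DifferentiableAt ℝ (deriv v) x) :
    ellipticOp b c (fun y => u y + v y) x = ellipticOp b c u x + ellipticOp b c v x := by
  have hderiv : deriv (fun y => u y + v y) =ᶠ[𝓝 x] fun y => deriv u y + deriv v y := by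
    filter_upwards [hu, hv] with y huy hvy
    exact deriv_add huy hvy
  rw [ellipticOp, ellipticOp, ellipticOp, hderiv.deriv_eq, hderiv.self_of_nhds,
    deriv_fun_add hu' hv']
  ring

lemma ellipticOp_const_mul (k : ℝ) :
    ellipticOp b c (fun y => k * u y) x = k * ellipticOp b c u x := by
  simp only [ellipticOp, deriv_const_mul_field']
  ring

lemma ellipticOp_exp_mul (α : ℝ) :
    ellipticOp b c (fun y => Real.exp (α * y)) x =
      (α ^ 2 + b x * α + c x) * Real.exp (α * x) := by
  have hderiv : deriv (fun y => Real.exp (α * y)) = fun y => α * Real.exp (α * y) := by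
    ext y
    simpa [mul_comm] using ((hasDerivAt_id y).const_mul α).exp.deriv
  simp only [ellipticOp, hderiv, deriv_const_mul_field']
  ring

lemma ellipticOp_comp_neg :
    ellipticOp (fun y => -b (-y)) (fun y => c (-y)) (fun y => u (-y)) x =
      ellipticOp b c u (-x) := by
  have hderiv : deriv (fun y => u (-y)) = fun y => -deriv u (-y) :=
    funext fun _ => deriv_comp_neg u _
  simp only [ellipticOp, hderiv, deriv.fun_neg, deriv_comp_neg]
  ring

end ellipticOp

/-- Were `f'' y > 0`, the second derivative test would make `y` a local minimum as well, so `f`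
would be locally constant. -/
theorem IsLocalMax.deriv_deriv_nonpos {f : ℝ → ℝ} {y : ℝ} (h : IsLocalMax f y)
    (hf : ContinuousAt f y) : deriv (deriv f) y ≤ 0 := by
  by_contra! hpos
  have hconst : f =ᶠ[𝓝 y] fun _ => f y := by
    filter_upwards [h, isLocalMin_of_deriv_deriv_pos hpos h.deriv_eq_zero hf] with x hmax hmin
    exact le_antisymm hmax hmin
  simp [hconst.deriv.deriv_eq] at hpos

theorem IsLocalMax.ellipticOp_nonpos {b c u : ℝ → ℝ} {y : ℝ} (h : IsLocalMax u y)
    (hu : ContinuousAt u y) (hc : c y ≤ 0) (huy : 0 ≤ u y) : ellipticOp b c u y ≤ 0 := by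
  rw [ellipticOp, h.deriv_eq_zero, mul_zero, add_zero]
  linarith [h.deriv_deriv_nonpos hu, mul_nonpos_of_nonpos_of_nonneg hc huy]

theorem IsMaxOn.hasDerivAt_nonpos_of_left {f : ℝ → ℝ} {a b d : ℝ} (hab : a < b)
    (h : IsMaxOn f (Icc a b) a) (hf : HasDerivAt f d a) : d ≤ 0 := by
  have hcone : b - a ∈ posTangentConeAt (Icc a b) a :=
    sub_mem_posTangentConeAt_of_segment_subset (segment_eq_Icc hab.le).subset
  have := h.localize.hasFDerivWithinAt_nonpos hf.hasFDerivAt.hasFDerivWithinAt hcone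
  simp only [ContinuousLinearMap.toSpanSingleton_apply, smul_eq_mul] at this
  nlinarith

theorem IsCompact.exists_pos_forall_sq_add_mul_add_pos {s : Set ℝ} (hs : IsCompact s)
    {b c : ℝ → ℝ} (hb : ContinuousOn b s) (hc : ContinuousOn c s) :
    ∃ α > 0, ∀ x ∈ s, 0 < α ^ 2 + b x * α + c x := by
  obtain ⟨B, hB⟩ := hs.exists_bound_of_continuousOn hb
  obtain ⟨C, hC⟩ := hs.exists_bound_of_continuousOn hc
  refine ⟨|B| + |C| + 1, by positivity, fun x hx => ?_⟩
  have hbx := abs_le.1 ((Real.norm_eq_abs _).symm.trans_le ((hB x hx).trans (le_abs_self B)))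
  have hcx := abs_le.1 ((Real.norm_eq_abs _).symm.trans_le ((hC x hx).trans (le_abs_self C)))
  nlinarith [abs_nonneg B, abs_nonneg C]

theorem hopf_lemma_right {u b c : ℝ → ℝ} {x₀ x₁ : ℝ} (hx : x₀ < x₁)
    (hu : ContinuousOn u (Icc x₀ x₁)) (hu₀ : DifferentiableAt ℝ u x₀)
    (hu₁ : ∀ x ∈ Ioo x₀ x₁, DifferentiableAt ℝ u x)
    (hu₂ : ∀ x ∈ Ioo x₀ x₁, DifferentiableAt ℝ (deriv u) x)
    (hb : ContinuousOn b (Icc x₀ x₁)) (hc : ContinuousOn c (Icc x₀ x₁))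
    (hc₀ : ∀ x ∈ Ioo x₀ x₁, c x ≤ 0) (hL : ∀ x ∈ Ioo x₀ x₁, 0 ≤ ellipticOp b c u x)
    (hpos : 0 ≤ u x₀) (hlt : u x₁ < u x₀) : deriv u x₀ < 0 := by
  obtain ⟨α, hα, hαbc⟩ := isCompact_Icc.exists_pos_forall_sq_add_mul_add_pos hb hc
  set ε := (u x₀ - u x₁) / (2 * Real.exp (α * x₁)) with hε_def
  have hε : 0 < ε := div_pos (by linarith) (by positivity)
  have hεx₁ : ε * Real.exp (α * x₁) < u x₀ - u x₁ := by
    rw [hε_def, div_mul_eq_mul_div, div_lt_iff₀ (by positivity)]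
    nlinarith [Real.exp_pos (α * x₁)]
  set w := fun x => u x + ε * Real.exp (α * x) with hw_def
  have hexp : ∀ x, HasDerivAt (fun y => ε * Real.exp (α * y)) (ε * (α * Real.exp (α * x))) x :=
    fun x => by simpa [mul_comm] using ((hasDerivAt_id x).const_mul α).exp.const_mul ε
  have hwL : ∀ x ∈ Ioo x₀ x₁, 0 < ellipticOp b c w x := by
    intro x hx
    rw [hw_def, ellipticOp_add (eventually_of_mem (isOpen_Ioo.mem_nhds hx) hu₁)
      (Eventually.of_forall fun y => (hexp y).differentiableAt) (hu₂ x hx) (by fun_prop),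
      ellipticOp_const_mul, ellipticOp_exp_mul]
    have := hαbc x (Ioo_subset_Icc_self hx)
    have := hL x hx
    positivity
  have hw_cont : ContinuousOn w (Icc x₀ x₁) := hu.add (by fun_prop)
  obtain ⟨y, hy, hy_max⟩ := isCompact_Icc.exists_isMaxOn (nonempty_Icc.2 hx.le) hw_cont
  have hwx₀ : u x₀ < w x₀ := lt_add_of_pos_right _ (by positivity)
  have hwy : w x₀ ≤ w y := hy_max (left_mem_Icc.2 hx.le)
  have hy_pos : 0 ≤ w y := by linarith
  have hy_ne : y ≠ x₁ := by
    rintro rfl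
    have : w y < u x₀ := by simp only [hw_def]; linarith
    linarith
  have hy_not_mem : y ∉ Ioo x₀ x₁ := fun hy' =>
    (hwL y hy').not_ge <| (hy_max.isLocalMax (Icc_mem_nhds hy'.1 hy'.2)).ellipticOp_nonpos
      (hw_cont.continuousAt (Icc_mem_nhds hy'.1 hy'.2)) (hc₀ y hy') hy_pos
  obtain rfl : y = x₀ := by
    by_contra hy₀
    exact hy_not_mem ⟨lt_of_le_of_ne hy.1 (Ne.symm hy₀), lt_of_le_of_ne hy.2 hy_ne⟩
  have := hy_max.hasDerivAt_nonpos_of_left hx (hu₀.hasDerivAt.add (hexp y))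
  nlinarith [Real.exp_pos (α * y)]

theorem hopf_lemma_left {u b c : ℝ → ℝ} {x₀ x₁ : ℝ} (hx : x₁ < x₀)
    (hu : ContinuousOn u (Icc x₁ x₀)) (hu₀ : DifferentiableAt ℝ u x₀)
    (hu₁ : ∀ x ∈ Ioo x₁ x₀, DifferentiableAt ℝ u x)
    (hu₂ : ∀ x ∈ Ioo x₁ x₀, DifferentiableAt ℝ (deriv u) x)
    (hb : ContinuousOn b (Icc x₁ x₀)) (hc : ContinuousOn c (Icc x₁ x₀))
    (hc₀ : ∀ x ∈ Ioo x₁ x₀, c x ≤ 0) (hL : ∀ x ∈ Ioo x₁ x₀, 0 ≤ ellipticOp b c u x)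
    (hpos : 0 ≤ u x₀) (hlt : u x₁ < u x₀) : 0 < deriv u x₀ := by
  have hIcc : MapsTo Neg.neg (Icc (-x₀) (-x₁)) (Icc x₁ x₀) := fun x hx =>
    ⟨le_neg_of_le_neg hx.2, neg_le_of_neg_le hx.1⟩
  have hIoo : MapsTo Neg.neg (Ioo (-x₀) (-x₁)) (Ioo x₁ x₀) := fun x hx =>
    ⟨lt_neg_of_lt_neg hx.2, neg_lt_of_neg_lt hx.1⟩
  have hderiv : deriv (fun y => u (-y)) = fun y => -deriv u (-y) :=
    funext fun _ => deriv_comp_neg u _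
  have := hopf_lemma_right (u := fun y => u (-y)) (b := fun y => -b (-y)) (c := fun y => c (-y))
    (neg_lt_neg hx) (hu.comp continuous_neg.continuousOn hIcc)
    (differentiableAt_comp_neg.2 (by rwa [neg_neg]))
    (fun x hx => differentiableAt_comp_neg.2 (hu₁ _ (hIoo hx)))
    (fun x hx => by rw [hderiv]; exact (differentiableAt_comp_neg.2 (hu₂ _ (hIoo hx))).neg)
    (hb.comp continuous_neg.continuousOn hIcc).neg (hc.comp continuous_neg.continuousOn hIcc)
    (fun x hx => hc₀ _ (hIoo hx)) (fun x hx => ellipticOp_comp_neg.trans_ge (hL _ (hIoo hx)))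
    (by rwa [neg_neg]) (by simpa only [neg_neg] using hlt)
  rw [hderiv] at this
  simpa using this

/-- 1D strong maximum principle: if `u'' + b u' + c u ≥ 0` with `c ≤ 0` and `u` attains a
nonnegative interior maximum, then `u` is constant on `[0,1]`. -/
theorem strong_max_principle_1d (u b c : ℝ → ℝ)
    (hc : ContinuousOn u (Icc 0 1))
    (hd : ∀ x ∈ Ioo (0:ℝ) 1, DifferentiableAt ℝ u x)
    (hd' : ∀ x ∈ Ioo (0:ℝ) 1, DifferentiableAt ℝ (deriv u) x)
    (hb : ContinuousOn b (Icc 0 1)) (hcc : ContinuousOn c (Icc 0 1))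
    (hc0 : ∀ x ∈ Icc (0:ℝ) 1, c x ≤ 0)
    (hineq : ∀ x ∈ Ioo (0:ℝ) 1,
      0 ≤ deriv (deriv u) x + b x * deriv u x + c x * u x)
    (x₀ : ℝ) (hx₀ : x₀ ∈ Ioo (0:ℝ) 1)
    (hmax : ∀ x ∈ Icc (0:ℝ) 1, u x ≤ u x₀) (hpos : 0 ≤ u x₀) :
    ∀ x ∈ Icc (0:ℝ) 1, u x = u x₀ := by
  have hderiv : deriv u x₀ = 0 :=
    (IsMaxOn.isLocalMax (f := u) hmax (Icc_mem_nhds hx₀.1 hx₀.2)).deriv_eq_zero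
  intro z hz
  by_contra hne
  have hlt : u z < u x₀ := lt_of_le_of_ne (hmax z hz) hne
  rcases lt_trichotomy x₀ z with hx₀z | rfl | hzx₀
  · have hIoo : Ioo x₀ z ⊆ Ioo 0 1 := Ioo_subset_Ioo hx₀.1.le hz.2
    have hIcc : Icc x₀ z ⊆ Icc 0 1 := Icc_subset_Icc hx₀.1.le hz.2
    have := hopf_lemma_right hx₀z (hc.mono hIcc) (hd x₀ hx₀) (fun x hx => hd x (hIoo hx))
      (fun x hx => hd' x (hIoo hx)) (hb.mono hIcc) (hcc.mono hIcc)
      (fun x hx => hc0 x (Ioo_subset_Icc_self (hIoo hx))) (fun x hx => hineq x (hIoo hx))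
      hpos hlt
    linarith
  · exact hne rfl
  · have hIoo : Ioo z x₀ ⊆ Ioo 0 1 := Ioo_subset_Ioo hz.1 hx₀.2.le
    have hIcc : Icc z x₀ ⊆ Icc 0 1 := Icc_subset_Icc hz.1 hx₀.2.le
    have := hopf_lemma_left hzx₀ (hc.mono hIcc) (hd x₀ hx₀) (fun x hx => hd x (hIoo hx))
      (fun x hx => hd' x (hIoo hx)) (hb.mono hIcc) (hcc.mono hIcc)
      (fun x hx => hc0 x (Ioo_subset_Icc_self (hIoo hx))) (fun x hx => hineq x (hIoo hx))
      hpos hlt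
    linarith
end

section
/- (One-dimensional Hopf lemma) Let u : [0,1] → ℝ be C² with u'' + b(x)u' ≥ 0 on (0,1) for continuous bounded b, and suppose u(x) < u(1) for all x ∈ [0,1). Then the derivative at the boundary maximum is strictly positive: u'(1) > 0. -/
open Set Real

/-!
Suppose `u'(1) ≤ 0`. If `B` is a primitive of `b`, the integrating factor `e^B` turns the
differential inequality into `(e^B u')' = e^B (u'' + b u') ≥ 0`, so `e^B u'` is nondecreasing on
`[0,1]`; as it is `≤ 0` at `1`, we get `u' ≤ 0` on `[0,1]`. Then `u` is nonincreasing, so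
`u(1) ≤ u(0)`, contradicting the strict maximum at `1`.
-/

section IntegratingFactor

variable {a b : ℝ} {c f f' : ℝ → ℝ}

theorem exists_primitive_of_continuousOn_Icc (hab : a ≤ b) (hc : ContinuousOn c (Icc a b)) :
    ∃ C : ℝ → ℝ, ContinuousOn C (Icc a b) ∧ ∀ x ∈ Ioo a b, HasDerivAt C (c x) x := by
  have hc_int : MeasureTheory.IntegrableOn c (uIcc a b) := by
    rw [uIcc_of_le hab]
    exact hc.integrableOn_Icc
  refine ⟨fun x ↦ ∫ t in a..x, c t, ?_, fun x hx ↦ ?_⟩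
  · simpa only [uIcc_of_le hab] using intervalIntegral.continuousOn_primitive_interval hc_int
  · exact intervalIntegral.integral_hasDerivAt_right
      (hc.mono (Icc_subset_Icc_right hx.2.le) |>.intervalIntegrable_of_Icc hx.1.le)
      (hc.mono Ioo_subset_Icc_self |>.stronglyMeasurableAtFilter isOpen_Ioo x hx)
      (hc.continuousAt (Icc_mem_nhds hx.1 hx.2))

theorem monotoneOn_exp_mul_of_deriv_add_mul_nonneg {C : ℝ → ℝ}
    (hC : ContinuousOn C (Icc a b)) (hC' : ∀ x ∈ Ioo a b, HasDerivAt C (c x) x)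
    (hf : ContinuousOn f (Icc a b)) (hf' : ∀ x ∈ Ioo a b, HasDerivAt f (f' x) x)
    (hineq : ∀ x ∈ Ioo a b, 0 ≤ f' x + c x * f x) :
    MonotoneOn (fun x ↦ exp (C x) * f x) (Icc a b) := by
  refine monotoneOn_of_hasDerivWithinAt_nonneg (f' := fun x ↦ exp (C x) * (f' x + c x * f x))
    (convex_Icc a b) ((continuous_exp.comp_continuousOn hC).mul hf) (fun x hx ↦ ?_)
    (fun x hx ↦ ?_)
  · rw [interior_Icc] at hx ⊢
    exact ((hC' x hx).exp.mul (hf' x hx)).hasDerivWithinAt.congr_deriv (by ring)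
  · rw [interior_Icc] at hx
    exact mul_nonneg (exp_pos _).le (hineq x hx)

theorem nonpos_of_deriv_add_mul_nonneg (hab : a ≤ b) (hc : ContinuousOn c (Icc a b))
    (hf : ContinuousOn f (Icc a b)) (hf' : ∀ x ∈ Ioo a b, HasDerivAt f (f' x) x)
    (hineq : ∀ x ∈ Ioo a b, 0 ≤ f' x + c x * f x) (hfb : f b ≤ 0) :
    ∀ x ∈ Icc a b, f x ≤ 0 := by
  obtain ⟨C, hC, hC'⟩ := exists_primitive_of_continuousOn_Icc hab hc
  intro x hx
  have hmono := monotoneOn_exp_mul_of_deriv_add_mul_nonneg hC hC' hf hf' hineq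
  have : exp (C x) * f x ≤ 0 :=
    (hmono hx (right_mem_Icc.2 hab) hx.2).trans
      (mul_nonpos_of_nonneg_of_nonpos (exp_pos _).le hfb)
  exact nonpos_of_mul_nonpos_right this (exp_pos _)

end IntegratingFactor

theorem DifferentiableOn.hasDerivAt_derivWithin_Icc {a b x : ℝ} {f : ℝ → ℝ}
    (hf : DifferentiableOn ℝ f (Icc a b)) (hx : x ∈ Ioo a b) :
    HasDerivAt f (derivWithin f (Icc a b) x) x :=
  (hf x (Ioo_subset_Icc_self hx)).hasDerivWithinAt.hasDerivAt (Icc_mem_nhds hx.1 hx.2)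

/-- 1D Hopf lemma: if `u ∈ C²([0,1])` satisfies `u'' + b u' ≥ 0` on `(0,1)` and
`u(x) < u(1)` for all `x ∈ [0,1)`, then `u'(1) > 0`. -/
theorem hopf_lemma_1d (u b : ℝ → ℝ)
    (hu : ContDiffOn ℝ 2 u (Icc 0 1))
    (hb : ContinuousOn b (Icc 0 1))
    (hineq : ∀ x ∈ Ioo (0:ℝ) 1,
      0 ≤ derivWithin (derivWithin u (Icc 0 1)) (Icc 0 1) x +
        b x * derivWithin u (Icc 0 1) x)
    (hmax : ∀ x ∈ Ico (0:ℝ) 1, u x < u 1) :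
    0 < derivWithin u (Icc 0 1) 1 := by
  have hu' : ContDiffOn ℝ 1 (derivWithin u (Icc 0 1)) (Icc 0 1) :=
    hu.derivWithin (uniqueDiffOn_Icc zero_lt_one) (by norm_num)
  by_contra! h
  have hu'_nonpos : ∀ x ∈ Icc (0:ℝ) 1, derivWithin u (Icc 0 1) x ≤ 0 :=
    nonpos_of_deriv_add_mul_nonneg zero_le_one hb hu'.continuousOn
      (fun x hx ↦ (hu'.differentiableOn one_ne_zero).hasDerivAt_derivWithin_Icc hx) hineq h
  have hu_anti : AntitoneOn u (Icc 0 1) := by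
    refine antitoneOn_of_hasDerivWithinAt_nonpos (convex_Icc 0 1) hu.continuousOn
      (fun x hx ↦ ?_) (fun x hx ↦ hu'_nonpos x (interior_subset hx))
    rw [interior_Icc] at hx ⊢
    exact ((hu.differentiableOn two_ne_zero).hasDerivAt_derivWithin_Icc hx).hasDerivWithinAt
  have := hu_anti (left_mem_Icc.2 zero_le_one) (right_mem_Icc.2 zero_le_one) zero_le_one
  exact (hmax 0 (left_mem_Ico.2 zero_lt_one)).not_ge this
end
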